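/- For every n : ℕ, the softmax map from ℝⁿ to ℝⁿ (with the Euclidean norm on both sides) is Lipschitz with constant 1: for all x, y : Fin n → ℝ, ‖softmax(x) − softmax(y)‖₂ ≤ ‖x − y‖₂. -/

import Mathlib

/-!
With `p = softmax x`, a probability vector, the Jacobian of softmax at `x` is
`v ↦ p ⊙ (v - ⟪p, v⟫)`. Since `p i ^ 2 ≤ p i`, its squared norm is at most the variance of `v`
under `p`, which is at most the second moment `∑ p i * v i ^ 2 ≤ ‖v‖²`. The mean value
inequality then makes softmax `1`-Lipschitz for the Euclidean norm.
-/

open Real Finset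

/-- The softmax map `softmax(x)_i = exp(x_i) / ∑_j exp(x_j)` on `ℝⁿ`. -/
noncomputable def softmax {n : ℕ} (x : Fin n → ℝ) : Fin n → ℝ :=
  fun i => Real.exp (x i) / ∑ j, Real.exp (x j)

theorem sum_sq_mul_sub_sum_mul_le_sum_sq {ι : Type*} [Fintype ι] {p : ι → ℝ}
    (hp₀ : ∀ i, 0 ≤ p i) (hp₁ : ∑ i, p i = 1) (v : ι → ℝ) :
    ∑ i, (p i * (v i - ∑ j, p j * v j)) ^ 2 ≤ ∑ i, v i ^ 2 := by
  set m := ∑ j, p j * v j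
  have hp_le_one (i : ι) : p i ≤ 1 := hp₁ ▸ single_le_sum (fun j _ => hp₀ j) (mem_univ i)
  have variance_eq : ∑ i, p i * (v i - m) ^ 2 = ∑ i, p i * v i ^ 2 - m ^ 2 := by
    have (i : ι) : p i * (v i - m) ^ 2 = p i * v i ^ 2 - 2 * m * (p i * v i) + m ^ 2 * p i := by
      ring
    simp only [this, sum_add_distrib, sum_sub_distrib, ← mul_sum, hp₁]
    ring
  calc ∑ i, (p i * (v i - m)) ^ 2
      ≤ ∑ i, p i * (v i - m) ^ 2 := by
        gcongr with i
        nlinarith [mul_nonneg (mul_nonneg (hp₀ i) (sub_nonneg.2 (hp_le_one i)))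
          (sq_nonneg (v i - m))]
    _ = ∑ i, p i * v i ^ 2 - m ^ 2 := variance_eq
    _ ≤ ∑ i, p i * v i ^ 2 := sub_le_self _ (sq_nonneg m)
    _ ≤ ∑ i, v i ^ 2 := by
        gcongr with i
        nlinarith [mul_nonneg (sq_nonneg (v i)) (sub_nonneg.2 (hp_le_one i))]

section

variable {n : ℕ}

theorem sum_exp_pos [NeZero n] (x : Fin n → ℝ) : 0 < ∑ j, exp (x j) :=
  sum_pos (fun _ _ => exp_pos _) univ_nonempty

theorem softmax_nonneg (x : Fin n → ℝ) (i : Fin n) : 0 ≤ softmax x i := by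
  unfold softmax; positivity

theorem sum_softmax [NeZero n] (x : Fin n → ℝ) : ∑ i, softmax x i = 1 := by
  simp only [softmax, ← sum_div, div_self (sum_exp_pos x).ne']

open ContinuousLinearMap in
noncomputable def softmaxJacobian (x : Fin n → ℝ) : (Fin n → ℝ) →L[ℝ] (Fin n → ℝ) :=
  pi fun i => softmax x i • (proj i - ∑ j, softmax x j • proj j)

theorem softmaxJacobian_apply (x v : Fin n → ℝ) (i : Fin n) :
    softmaxJacobian x v i = softmax x i * (v i - ∑ j, softmax x j * v j) := by
  simp [softmaxJacobian]

open ContinuousLinearMap in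
theorem hasFDerivAt_softmax [NeZero n] (x : Fin n → ℝ) :
    HasFDerivAt softmax (softmaxJacobian x) x := by
  have hS := (sum_exp_pos x).ne'
  refine hasFDerivAt_pi.2 fun i => ?_
  have hsum : HasFDerivAt (fun y : Fin n → ℝ => ∑ j, exp (y j))
      (∑ j, exp (x j) • proj j) x :=
    HasFDerivAt.fun_sum fun j _ => (hasFDerivAt_apply j x).exp
  have h := (hasFDerivAt_apply i x).exp.fun_mul ((hasDerivAt_inv hS).comp_hasFDerivAt x hsum)
  refine (h.congr_fderiv ?_).congr_of_eventuallyEq ?_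
  · ext v
    simp only [softmax, neg_smul, smul_neg, Function.comp_apply, add_apply, neg_apply,
      smul_apply, _root_.sum_apply, proj_apply, smul_eq_mul, sub_apply, div_mul_eq_mul_div,
      ← sum_div]
    field_simp
    ring
  · exact .of_forall fun y => by simp [softmax, div_eq_mul_inv]

theorem norm_toLp_softmaxJacobian_le [NeZero n] (x v : Fin n → ℝ) :
    ‖WithLp.toLp 2 (softmaxJacobian x v)‖ ≤ ‖WithLp.toLp 2 v‖ := by
  simp only [EuclideanSpace.norm_eq, Real.norm_eq_abs, sq_abs, softmaxJacobian_apply]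
  apply Real.sqrt_le_sqrt
  exact sum_sq_mul_sub_sum_mul_le_sum_sq (softmax_nonneg x) (sum_softmax x) v

end

theorem lipschitzWith_softmax_euclidean (n : ℕ) :
    LipschitzWith 1 fun z : EuclideanSpace ℝ (Fin n) => WithLp.toLp 2 (softmax z.ofLp) := by
  rcases n.eq_zero_or_pos with rfl | hn
  · exact .of_dist_le_mul fun z w => by simp [Subsingleton.elim z w]
  have : NeZero n := ⟨hn.ne'⟩
  let e := (EuclideanSpace.equiv (Fin n) ℝ).toContinuousLinearMap
  let e' := (EuclideanSpace.equiv (Fin n) ℝ).symm.toContinuousLinearMap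
  rw [← lipschitzOnWith_univ]
  refine convex_univ.lipschitzOnWith_of_nnnorm_hasFDerivWithin_le
    (f' := fun z => e' ∘L softmaxJacobian z.ofLp ∘L e) (fun z _ => ?_) (fun z _ => ?_)
  · exact (e'.hasFDerivAt.comp z ((hasFDerivAt_softmax _).comp z e.hasFDerivAt)).hasFDerivWithinAt
  · refine ContinuousLinearMap.opNNNorm_le_bound _ _ fun v => ?_
    rw [one_mul, ← NNReal.coe_le_coe, coe_nnnorm, coe_nnnorm]
    exact norm_toLp_softmaxJacobian_le z.ofLp v.ofLp

/-- Softmax is Lipschitz with constant `1` with respect to the Euclidean (ℓ²)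
norm on both sides: `‖softmax x − softmax y‖₂ ≤ ‖x − y‖₂`. -/
theorem stmt_6 (n : ℕ) (x y : Fin n → ℝ) :
    Real.sqrt (∑ i, (softmax x i - softmax y i) ^ 2) ≤
      Real.sqrt (∑ i, (x i - y i) ^ 2) := by
  simpa [EuclideanSpace.dist_eq, Real.dist_eq, sq_abs] using
    (lipschitzWith_softmax_euclidean n).dist_le_mul (WithLp.toLp 2 x) (WithLp.toLp 2 y)
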